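/- Let (X,d) be a finite ultrametric space with |X| ≥ 3. Then |Sp(X)| = |X| if and only if there exists an enumeration x₁,...,xₙ of all points of X such that the map i ↦ d(xᵢ, xᵢ₊₁), for 1 ≤ i ≤ n−1, is injective (i.e., the n−1 consecutive distances along this Hamiltonian path are pairwise distinct and positive). -/

import Mathlib

/-!
Split a finite ultrametric set `s` at its diameter `M`: the open ball of radius `M` around one end
of a diametral pair and its complement are nonempty and at constant mutual distance `M`. So the
nonzero distances of `s` are those of the two parts together with `M`, and induction gives the
Gomory–Hu bound: `s` has at most `#s - 1` nonzero distances. A characteristic Hamiltonian path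
exhibits `#s - 1` distinct nonzero distances, so it forces equality. Conversely, equality for `s`
forces equality for both parts, disjoint nonzero spectra, and `M` in neither, so characteristic
paths of the parts joined by an edge of length `M` form one of `s`.
-/

open Finset

section

variable {X : Type*}

structure IsUltrametric (d : X → X → ℝ) : Prop where
  symm : ∀ x y, d x y = d y x
  eq_zero_iff : ∀ x y, d x y = 0 ↔ x = y
  le_max : ∀ x y z, d x y ≤ max (d x z) (d z y)

namespace IsUltrametric

variable {d : X → X → ℝ} (hd : IsUltrametric d)
include hd

theorem dist_self (x : X) : d x x = 0 := (hd.eq_zero_iff x x).2 rfl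

theorem nonneg (x y : X) : 0 ≤ d x y := by
  have h := hd.le_max x x y
  rw [hd.dist_self, hd.symm y x, max_self] at h
  exact h

theorem pos {x y : X} (h : x ≠ y) : 0 < d x y :=
  (hd.nonneg x y).lt_of_ne' fun h0 => h ((hd.eq_zero_iff x y).1 h0)

theorem dist_eq_of_dist_lt {p x y : X} (h : d p x < d p y) : d x y = d p y := by
  refine le_antisymm ?_ ?_
  · calc d x y ≤ max (d x p) (d p y) := hd.le_max x y p
      _ = d p y := by rw [hd.symm x p, max_eq_right h.le]
  · rcases le_max_iff.1 (hd.le_max p y x) with h' | h'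
    · exact absurd h (not_lt.2 h')
    · exact h'

/-- A nontrivial set splits into two nonempty parts at constant mutual distance: the open ball
of radius `diam s` around one end of a diametral pair, and its complement. -/
theorem exists_split [DecidableEq X] {s : Finset X} (hs : s.Nontrivial) :
    ∃ t u : Finset X, ∃ M : ℝ, t.Nonempty ∧ u.Nonempty ∧ Disjoint t u ∧ t ∪ u = s ∧
      ∀ x ∈ t, ∀ y ∈ u, d x y = M := by
  obtain ⟨⟨p, q⟩, hpq, hmax⟩ :=
    exists_max_image (s ×ˢ s) (fun z => d z.1 z.2) (hs.nonempty.product hs.nonempty)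
  simp only [mem_product, Prod.forall] at hpq hmax
  obtain ⟨a, ha, b, hb, hab⟩ := hs
  have hM : 0 < d p q := (hd.pos hab).trans_le (hmax a b ⟨ha, hb⟩)
  refine ⟨s.filter (d p · < d p q), s.filter (¬ d p · < d p q), d p q,
    ⟨p, by simp [hpq.1, hd.dist_self, hM]⟩, ⟨q, by simp [hpq.2]⟩,
    disjoint_filter_filter_not _ _ _, filter_union_filter_not_eq _ _, ?_⟩
  intro x hx y hy
  rw [mem_filter] at hx hy
  have hpy : d p y = d p q := le_antisymm (hmax p y ⟨hpq.1, hy.1⟩) (not_lt.1 hy.2)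
  rw [hd.dist_eq_of_dist_lt (hpy ▸ hx.2), hpy]

end IsUltrametric

variable (d : X → X → ℝ)

def consecutiveDists (l : List X) : List ℝ := (l.zip l.tail).map fun p => d p.1 p.2

noncomputable def distSpectrum (s : Finset X) : Finset ℝ := (s ×ˢ s).image fun p => d p.1 p.2

noncomputable def posSpectrum [DecidableEq X] (s : Finset X) : Finset ℝ :=
  s.offDiag.image fun p => d p.1 p.2

variable {d}

theorem length_consecutiveDists (l : List X) : (consecutiveDists d l).length = l.length - 1 := by
  simp [consecutiveDists]

theorem consecutiveDists_append {l₁ l₂ : List X} (h₁ : l₁ ≠ []) (h₂ : l₂ ≠ []) :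
    consecutiveDists d (l₁ ++ l₂) =
      consecutiveDists d l₁ ++ d (l₁.getLast h₁) (l₂.head h₂) :: consecutiveDists d l₂ := by
  induction l₁ with
  | nil => exact absurd rfl h₁
  | cons a t ih =>
    obtain ⟨b, l₂, rfl⟩ := List.exists_cons_of_ne_nil h₂
    cases t with
    | nil => simp [consecutiveDists]
    | cons c t => simpa [consecutiveDists] using ih (List.cons_ne_nil c t)

theorem exists_mem_of_mem_consecutiveDists {l : List X} {r : ℝ} (hr : r ∈ consecutiveDists d l) :
    ∃ x ∈ l, ∃ y ∈ l, d x y = r := by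
  obtain ⟨⟨x, y⟩, hxy, rfl⟩ := List.mem_map.1 hr
  exact ⟨x, (List.of_mem_zip hxy).1, y, List.mem_of_mem_tail (List.of_mem_zip hxy).2, rfl⟩

variable [DecidableEq X]

theorem dist_mem_posSpectrum {s : Finset X} {x y : X} (hx : x ∈ s) (hy : y ∈ s) (hxy : x ≠ y) :
    d x y ∈ posSpectrum d s :=
  mem_image.2 ⟨(x, y), mem_offDiag.2 ⟨hx, hy, hxy⟩, rfl⟩

theorem posSpectrum_eq_empty {s : Finset X} (hs : s.card ≤ 1) : posSpectrum d s = ∅ := by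
  rw [posSpectrum, image_eq_empty, ← card_eq_zero, offDiag_card]
  interval_cases s.card <;> rfl

theorem posSpectrum_union_subset (hsymm : ∀ x y, d x y = d y x) {t u : Finset X} {M : ℝ}
    (hcross : ∀ x ∈ t, ∀ y ∈ u, d x y = M) :
    posSpectrum d (t ∪ u) ⊆ insert M (posSpectrum d t ∪ posSpectrum d u) := by
  intro r hr
  obtain ⟨⟨x, y⟩, hxy, rfl⟩ := mem_image.1 hr
  obtain ⟨hx, hy, hne⟩ := mem_offDiag.1 hxy
  rw [mem_union] at hx hy
  rcases hx with hx | hx <;> rcases hy with hy | hy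
  · exact mem_insert_of_mem (mem_union_left _ (dist_mem_posSpectrum hx hy hne))
  · rw [hcross x hx y hy]; exact mem_insert_self _ _
  · rw [hsymm, hcross y hy x hx]; exact mem_insert_self _ _
  · exact mem_insert_of_mem (mem_union_right _ (dist_mem_posSpectrum hx hy hne))

theorem ssubset_union_left_of_disjoint {t u : Finset X} (htu : Disjoint t u) (hu : u.Nonempty) :
    t ⊂ t ∪ u := by
  obtain ⟨x, hx⟩ := hu
  exact (ssubset_iff_of_subset subset_union_left).2
    ⟨x, mem_union_right _ hx, disjoint_right.1 htu hx⟩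

theorem IsUltrametric.card_posSpectrum_le (hd : IsUltrametric d) (s : Finset X) :
    (posSpectrum d s).card ≤ s.card - 1 := by
  induction s using Finset.strongInduction with
  | H s ih =>
  rcases le_or_gt s.card 1 with hs | hs
  · simp [posSpectrum_eq_empty hs]
  obtain ⟨t, u, M, ht, hu, htu, rfl, hcross⟩ := hd.exists_split (one_lt_card_iff_nontrivial.1 hs)
  have iht := ih t (ssubset_union_left_of_disjoint htu hu)
  have ihu := ih u (union_comm t u ▸ ssubset_union_left_of_disjoint htu.symm ht)
  calc (posSpectrum d (t ∪ u)).card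
      ≤ (insert M (posSpectrum d t ∪ posSpectrum d u)).card :=
        card_le_card (posSpectrum_union_subset hd.symm hcross)
    _ ≤ (posSpectrum d t).card + (posSpectrum d u).card + 1 :=
        (card_insert_le _ _).trans (Nat.add_le_add_right (card_union_le _ _) 1)
    _ ≤ (t ∪ u).card - 1 := by
        rw [card_union_of_disjoint htu]; have := ht.card_pos; have := hu.card_pos; omega

variable (d) in
structure IsCharacteristicPath (s : Finset X) (l : List X) : Prop where
  nodup : l.Nodup
  toFinset_eq : l.toFinset = s
  dists_nodup : (consecutiveDists d l).Nodup
  dists_pos : ∀ r ∈ consecutiveDists d l, 0 < r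

namespace IsCharacteristicPath

variable {s t u : Finset X} {l l₁ l₂ : List X}

theorem card_eq (h : IsCharacteristicPath d s l) : s.card = l.length := by
  rw [← h.toFinset_eq, List.toFinset_card_of_nodup h.nodup]

theorem dists_subset (hself : ∀ x, d x x = 0) (h : IsCharacteristicPath d s l) :
    (consecutiveDists d l).toFinset ⊆ posSpectrum d s := by
  intro r hr
  rw [List.mem_toFinset] at hr
  obtain ⟨x, hx, y, hy, rfl⟩ := exists_mem_of_mem_consecutiveDists hr
  rw [← List.mem_toFinset, h.toFinset_eq] at hx hy
  refine dist_mem_posSpectrum hx hy ?_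
  rintro rfl
  exact (h.dists_pos _ hr).ne' (hself x)

theorem card_sub_one_le (hself : ∀ x, d x x = 0) (h : IsCharacteristicPath d s l) :
    s.card - 1 ≤ (posSpectrum d s).card :=
  calc s.card - 1 = (consecutiveDists d l).toFinset.card := by
        rw [List.toFinset_card_of_nodup (l := consecutiveDists d l) h.dists_nodup,
          length_consecutiveDists, h.card_eq]
    _ ≤ (posSpectrum d s).card := card_le_card (h.dists_subset hself)

theorem of_card_le_one (hs : s.card ≤ 1) : IsCharacteristicPath d s s.toList := by
  have hnil : consecutiveDists d s.toList = [] := by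
    rw [← List.length_eq_zero_iff, length_consecutiveDists, length_toList]; omega
  exact ⟨nodup_toList s, toList_toFinset s, hnil ▸ List.nodup_nil, by simp [hnil]⟩

theorem append (hself : ∀ x, d x x = 0) (h₁ : IsCharacteristicPath d t l₁)
    (h₂ : IsCharacteristicPath d u l₂) (ht : t.Nonempty) (hu : u.Nonempty) (htu : Disjoint t u)
    {M : ℝ} (hcross : ∀ x ∈ t, ∀ y ∈ u, d x y = M) (hM : 0 < M)
    (hMtu : M ∉ posSpectrum d t ∪ posSpectrum d u)
    (hdisj : Disjoint (posSpectrum d t) (posSpectrum d u)) :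
    IsCharacteristicPath d (t ∪ u) (l₁ ++ l₂) := by
  have hl₁ : l₁ ≠ [] := by rintro rfl; simp [← h₁.toFinset_eq] at ht
  have hl₂ : l₂ ≠ [] := by rintro rfl; simp [← h₂.toFinset_eq] at hu
  have hjoin : d (l₁.getLast hl₁) (l₂.head hl₂) = M := by
    refine hcross _ ?_ _ ?_
    · rw [← h₁.toFinset_eq, List.mem_toFinset]; exact List.getLast_mem hl₁
    · rw [← h₂.toFinset_eq, List.mem_toFinset]; exact List.head_mem hl₂
  have hE₁ : ∀ r ∈ consecutiveDists d l₁, r ∈ posSpectrum d t := fun r hr =>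
    h₁.dists_subset hself (List.mem_toFinset.2 hr)
  have hE₂ : ∀ r ∈ consecutiveDists d l₂, r ∈ posSpectrum d u := fun r hr =>
    h₂.dists_subset hself (List.mem_toFinset.2 hr)
  refine ⟨h₁.nodup.append h₂.nodup ?_, ?_, ?_, ?_⟩
  · intro x hx₁ hx₂
    rw [← List.mem_toFinset, h₁.toFinset_eq] at hx₁
    rw [← List.mem_toFinset, h₂.toFinset_eq] at hx₂
    exact disjoint_left.1 htu hx₁ hx₂
  · rw [List.toFinset_append, h₁.toFinset_eq, h₂.toFinset_eq]
  · rw [consecutiveDists_append hl₁ hl₂, hjoin]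
    refine h₁.dists_nodup.append (List.nodup_cons.2 ⟨?_, h₂.dists_nodup⟩) ?_
    · exact fun hM₂ => hMtu (mem_union_right _ (hE₂ M hM₂))
    · intro r hr₁ hr₂
      rcases List.mem_cons.1 hr₂ with rfl | hr₂
      · exact hMtu (mem_union_left _ (hE₁ r hr₁))
      · exact disjoint_left.1 hdisj (hE₁ r hr₁) (hE₂ r hr₂)
  · rw [consecutiveDists_append hl₁ hl₂, hjoin]
    intro r hr
    simp only [List.mem_append, List.mem_cons] at hr
    rcases hr with hr | rfl | hr
    · exact h₁.dists_pos r hr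
    · exact hM
    · exact h₂.dists_pos r hr

end IsCharacteristicPath

namespace IsUltrametric

variable (hd : IsUltrametric d)
include hd

theorem exists_isCharacteristicPath {s : Finset X}
    (hs : (posSpectrum d s).card = s.card - 1) : ∃ l, IsCharacteristicPath d s l := by
  induction s using Finset.strongInduction with
  | H s ih =>
  rcases le_or_gt s.card 1 with h1 | h1
  · exact ⟨s.toList, .of_card_le_one h1⟩
  obtain ⟨t, u, M, ht, hu, htu, rfl, hcross⟩ := hd.exists_split (one_lt_card_iff_nontrivial.1 h1)
  have hsub := posSpectrum_union_subset hd.symm hcross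
  have hM : 0 < M := by
    obtain ⟨x, hx⟩ := ht
    obtain ⟨y, hy⟩ := hu
    exact hcross x hx y hy ▸ hd.pos (disjoint_iff_ne.1 htu x hx y hy)
  -- The Gomory–Hu bounds for `t` and `u` add up to the one for `t ∪ u`, so equality propagates.
  have := hd.card_posSpectrum_le t
  have := hd.card_posSpectrum_le u
  have := card_le_card hsub
  have := card_insert_le M (posSpectrum d t ∪ posSpectrum d u)
  have := card_union_le (posSpectrum d t) (posSpectrum d u)
  have := ht.card_pos
  have := hu.card_pos
  rw [card_union_of_disjoint htu] at hs
  have hMtu : M ∉ posSpectrum d t ∪ posSpectrum d u := fun hMtu => by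
    have := card_le_card (insert_eq_of_mem hMtu ▸ hsub)
    omega
  have hdisj : Disjoint (posSpectrum d t) (posSpectrum d u) :=
    card_union_eq_card_add_card.1 (by omega)
  obtain ⟨l₁, h₁⟩ := ih t (ssubset_union_left_of_disjoint htu hu) (by omega)
  obtain ⟨l₂, h₂⟩ := ih u (union_comm t u ▸ ssubset_union_left_of_disjoint htu.symm ht) (by omega)
  exact ⟨l₁ ++ l₂, h₁.append hd.dist_self h₂ ht hu htu hcross hM hMtu hdisj⟩

theorem card_posSpectrum_eq_iff (s : Finset X) :
    (posSpectrum d s).card = s.card - 1 ↔ ∃ l, IsCharacteristicPath d s l :=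
  ⟨hd.exists_isCharacteristicPath, fun ⟨_, h⟩ =>
    (hd.card_posSpectrum_le s).antisymm (h.card_sub_one_le hd.dist_self)⟩

theorem distSpectrum_eq_insert {s : Finset X} (hs : s.Nonempty) :
    distSpectrum d s = insert 0 (posSpectrum d s) := by
  obtain ⟨a, ha⟩ := hs
  ext r
  simp only [distSpectrum, posSpectrum, mem_insert, mem_image, mem_product, mem_offDiag,
    Prod.exists]
  constructor
  · rintro ⟨x, y, ⟨hx, hy⟩, rfl⟩
    by_cases hxy : x = y
    · exact .inl (hxy ▸ hd.dist_self x)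
    · exact .inr ⟨x, y, ⟨hx, hy, hxy⟩, rfl⟩
  · rintro (rfl | ⟨x, y, ⟨hx, hy, -⟩, rfl⟩)
    · exact ⟨a, a, ⟨ha, ha⟩, hd.dist_self a⟩
    · exact ⟨x, y, ⟨hx, hy⟩, rfl⟩

theorem card_distSpectrum_eq_card_iff (s : Finset X) :
    (distSpectrum d s).card = s.card ↔ (posSpectrum d s).card = s.card - 1 := by
  rcases s.eq_empty_or_nonempty with rfl | hs
  · simp [distSpectrum, posSpectrum]
  have h0 : 0 ∉ posSpectrum d s := fun h0 => by
    obtain ⟨⟨x, y⟩, hxy, hr⟩ := mem_image.1 h0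
    exact (hd.pos (mem_offDiag.1 hxy).2.2).ne' hr
  rw [hd.distSpectrum_eq_insert hs, card_insert_of_notMem h0]
  have := hs.card_pos
  omega

end IsUltrametric

end

theorem extremal_iff_characteristic_hamiltonian_path_general {X : Type*} [Fintype X]
    (d : X → X → ℝ)
    (hsymm : ∀ x y, d x y = d y x)
    (hzero : ∀ x y, d x y = 0 ↔ x = y)
    (hultra : ∀ x y z, d x y ≤ max (d x z) (d z y)) :
    (Finset.univ.image (fun p : X × X => d p.1 p.2)).card = Fintype.card X ↔
      ∃ l : List X, l.Nodup ∧ (∀ x : X, x ∈ l) ∧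
        ((l.zip l.tail).map (fun p => d p.1 p.2)).Nodup ∧
        (∀ r ∈ (l.zip l.tail).map (fun p => d p.1 p.2), (0 : ℝ) < r) := by
  classical
  have hd : IsUltrametric d := ⟨hsymm, hzero, hultra⟩
  rw [← univ_product_univ, ← card_univ]
  refine ((hd.card_distSpectrum_eq_card_iff univ).trans (hd.card_posSpectrum_eq_iff univ)).trans ?_
  refine exists_congr fun l => ⟨fun h => ⟨h.nodup, ?_, h.dists_nodup, h.dists_pos⟩,
    fun ⟨hnd, hmem, hdn, hpos⟩ => ⟨hnd, ?_, hdn, hpos⟩⟩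
  · exact fun x => List.mem_toFinset.1 (h.toFinset_eq ▸ mem_univ x)
  · exact eq_univ_iff_forall.2 fun x => List.mem_toFinset.2 (hmem x)

/-- A finite ultrametric space with at least 3 points is extremal for the
Gomory-Hu inequality iff its complete weighted graph contains a characteristic
Hamiltonian path (all consecutive distances positive and pairwise distinct). -/
theorem extremal_iff_characteristic_hamiltonian_path {X : Type*} [Fintype X]
    (d : X → X → ℝ)
    (hcard : 3 ≤ Fintype.card X)
    (hnonneg : ∀ x y, 0 ≤ d x y)
    (hsymm : ∀ x y, d x y = d y x)
    (hzero : ∀ x y, d x y = 0 ↔ x = y)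
    (hultra : ∀ x y z, d x y ≤ max (d x z) (d z y)) :
    (Finset.univ.image (fun p : X × X => d p.1 p.2)).card = Fintype.card X ↔
      ∃ l : List X, l.Nodup ∧ (∀ x : X, x ∈ l) ∧
        ((l.zip l.tail).map (fun p => d p.1 p.2)).Nodup ∧
        (∀ r ∈ (l.zip l.tail).map (fun p => d p.1 p.2), (0 : ℝ) < r) :=
  extremal_iff_characteristic_hamiltonian_path_general d hsymm hzero hultra
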